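/- arXiv:1905.12964 — 5 statements merged into one kernel-verified Lean document; each statement's English description precedes it below -/
import Mathlib

section
/- For n = 1, the key determinant identity holds: det of the 2×2 matrix with entries C₁₁ = p(x,y,z,a,b), C₁₂ = 1-a, C₂₁ = 1-b, C₂₂ = (1-c)/(1-z²) equals (-1)/((1-z²)(x-y)(1-xy)) times det of the 3×3 matrix V with rows (x^{j-1} - a x^{3-j})_{j=1,2,3}, (y^{j-1} - b y^{3-j})_{j=1,2,3}, (z^{j-1} - c z^{3-j})_{j=1,2,3}, where p(x,y,z,a,b) = (1-xz)(1-yz)/(1-xy) - a(x-z)(1-yz)/(x-y) + b(1-xz)(y-z)/(x-y) - ab(x-z)(y-z)/(1-xy). -/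
/-- The rational function `p(x,y,z,a,b)` from the key lemma. -/
noncomputable def pBKW {K : Type*} [Field K] (x y z a b : K) : K :=
  (1 - x*z)*(1 - y*z)/(1 - x*y)
    - a * ((x - z)*(1 - y*z)/(x - y))
    + b * ((1 - x*z)*(y - z)/(x - y))
    - a * b * ((x - z)*(y - z)/(1 - x*y))

set_option maxHeartbeats 2000000 in
/-- the key determinant identity for `n = 1`. -/
theorem stmt1 {K : Type*} [Field K] (x y z a b c : K)
    (hxy : x ≠ y) (hxy1 : x * y ≠ 1) (hz : z^2 ≠ 1) :
    Matrix.det !![pBKW x y z a b, 1 - a; 1 - b, (1 - c)/(1 - z^2)]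
    = (-1) / ((1 - z^2) * (x - y) * (1 - x*y)) *
      Matrix.det (Matrix.of fun i j : Fin 3 =>
        if i = 0 then x ^ (j : ℕ) - a * x ^ (2 - (j : ℕ))
        else if i = 1 then y ^ (j : ℕ) - b * y ^ (2 - (j : ℕ))
        else z ^ (j : ℕ) - c * z ^ (2 - (j : ℕ))) := by
  have h1 : x - y ≠ 0 := sub_ne_zero.mpr hxy
  have h2 : 1 - x*y ≠ 0 := sub_ne_zero.mpr (Ne.symm hxy1)
  have h3 : 1 - z^2 ≠ 0 := sub_ne_zero.mpr (Ne.symm hz)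
  have hD : (1 - z^2) * (x - y) * (1 - x*y) ≠ 0 := by
    exact mul_ne_zero (mul_ne_zero h3 h1) h2
  have hp : pBKW x y z a b
      = ((1 - x*z)*(1 - y*z)*(x - y) - a*((x - z)*(1 - y*z)*(1 - x*y))
          + b*((1 - x*z)*(y - z)*(1 - x*y)) - a*b*((x - z)*(y - z)*(x - y)))
        / ((x - y) * (1 - x*y)) := by
    unfold pBKW
    field_simp
  rw [Matrix.det_fin_two, Matrix.det_fin_three]
  simp only [Matrix.of_apply, Matrix.cons_val', Matrix.cons_val_zero, Matrix.cons_val_one,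
    Matrix.head_cons, Matrix.head_fin_const, Matrix.empty_val', Matrix.cons_val_fin_one]
  norm_num [hp]
  simp only [Fin.reduceEq, reduceIte]
  field_simp
  ring
end

section
/- Let C''(c) be the (n+1)×(n+1) matrix with entries C''_{ij} = 1/(1 - xᵢyⱼ) for 1 ≤ i,j ≤ n, C''_{i,n+1} = 1/(1 - xᵢz), C''_{n+1,j} = 1/(1 - yⱼz), and C''_{n+1,n+1} = (1-c)/(1-z²). Then the coefficient of c⁰ in det C''(c) equals [∏_{1≤i<j≤n}(xᵢ-xⱼ)(yᵢ-yⱼ) · ∏_{i=1}^n (xᵢ-z)(yᵢ-z)] / [∏_{i,j=1}^n (1-xᵢyⱼ) · ∏_{i=1}^n (1-xᵢz)(1-yᵢz) · (1-z²)]. -/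
open Polynomial in
/-- The bordered Cauchy matrix `C''(c)`, with `c` an indeterminate (`Polynomial.X`). -/
noncomputable def CppMat (n : ℕ) {K : Type*} [Field K] (x y : Fin n → K) (z : K) :
    Matrix (Fin (n+1)) (Fin (n+1)) (Polynomial K) :=
  Matrix.of fun i j =>
    if hi : (i : ℕ) < n then
      if hj : (j : ℕ) < n then C (1 / (1 - x ⟨i, hi⟩ * y ⟨j, hj⟩))
      else C (1 / (1 - x ⟨i, hi⟩ * z))
    else
      if hj : (j : ℕ) < n then C (1 / (1 - y ⟨j, hj⟩ * z))
      else C (1 / (1 - z^2)) * (1 - X)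

/-!
Only the corner entry of `C''(c)` depends on `c`, so the constant coefficient of `det C''(c)` is
`det C''(0)`, and `C''(0)` is the Cauchy-type matrix `(1 - uᵢvⱼ)⁻¹` with `u = (x, z)`, `v = (y, z)`.
Its determinant is computed by induction on the size: subtracting multiples of the last row from
the others clears the last column, and the remaining minor is the smaller Cauchy matrix scaled by
`(uᵢ - a) / (1 - uᵢ b)` in row `i` and `(vⱼ - b) / (1 - a vⱼ)` in column `j`, where `a`, `b` are the
last entries of `u`, `v`.
-/

open Finset Matrix

lemma prod_filter_lt_castSucc {M : Type*} [CommMonoid M] {N : ℕ}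
    (f : Fin (N+1) × Fin (N+1) → M) :
    ∏ p ∈ univ.filter (fun p : Fin (N+1) × Fin (N+1) => p.1 < p.2), f p =
      (∏ p ∈ univ.filter (fun p : Fin N × Fin N => p.1 < p.2), f (p.1.castSucc, p.2.castSucc)) *
        ∏ i : Fin N, f (i.castSucc, Fin.last N) := by
  simp [prod_filter, Fintype.prod_prod_type, Fin.prod_univ_castSucc, prod_mul_distrib,
    (Fin.castSucc_lt_last _).not_gt]

lemma det_succ_of_column_last_eq_zero {R : Type*} [CommRing R] {m : ℕ}
    (A : Matrix (Fin (m+1)) (Fin (m+1)) R) (h : ∀ i : Fin m, A i.castSucc (Fin.last m) = 0) :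
    A.det = A (Fin.last m) (Fin.last m) * (A.submatrix Fin.castSucc Fin.castSucc).det := by
  rw [det_succ_column A (Fin.last m), Fin.sum_univ_castSucc]
  simp [h, Fin.succAbove_last]

section Cauchy

variable {K : Type*} [Field K]

def cauchyMatrix {ι : Type*} (u v : ι → K) : Matrix ι ι K :=
  of fun i j => (1 - u i * v j)⁻¹

lemma cauchy_schur_entry {u v a b : K} (huv : 1 - u * v ≠ 0) (hub : 1 - u * b ≠ 0)
    (hav : 1 - a * v ≠ 0) :
    (1 - u * v)⁻¹ - (1 - a * b) / (1 - u * b) * (1 - a * v)⁻¹ =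
      (u - a) / (1 - u * b) * ((v - b) / (1 - a * v) * (1 - u * v)⁻¹) := by
  rw [inv_eq_one_div, inv_eq_one_div, div_mul_div_comm, div_mul_div_comm, div_mul_div_comm,
    div_sub_div _ _ huv (mul_ne_zero hub hav),
    div_eq_div_iff (mul_ne_zero huv (mul_ne_zero hub hav)) (mul_ne_zero hub (mul_ne_zero hav huv))]
  ring

lemma det_cauchyMatrix_snoc {m : ℕ} (u v : Fin m → K) (a b : K)
    (huv : ∀ i j, 1 - u i * v j ≠ 0) (hub : ∀ i, 1 - u i * b ≠ 0) (hav : ∀ j, 1 - a * v j ≠ 0)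
    (hab : 1 - a * b ≠ 0) :
    (cauchyMatrix (Fin.snoc u a : Fin (m+1) → K) (Fin.snoc v b)).det =
      (1 - a * b)⁻¹ * ((∏ i, (u i - a) / (1 - u i * b)) *
        ((∏ j, (v j - b) / (1 - a * v j)) * (cauchyMatrix u v).det)) := by
  let c : Fin (m+1) → K := Fin.snoc (fun i => (1 - a * b) / (1 - u i * b)) 0
  let A := cauchyMatrix (Fin.snoc u a : Fin (m+1) → K) (Fin.snoc v b)
  let B : Matrix (Fin (m+1)) (Fin (m+1)) K := of fun i j => A i j - c i * A (Fin.last m) j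
  have hB : A.det = B.det :=
    det_eq_of_forall_row_eq_smul_add_const c (Fin.last m) (by simp [c])
      fun i j => by simp [B, c]
  have hB_col : ∀ i : Fin m, B i.castSucc (Fin.last m) = 0 := by
    intro i
    simp [B, c, A, cauchyMatrix, div_mul_eq_mul_div, mul_inv_cancel₀ hab]
  have hB_sub : B.submatrix Fin.castSucc Fin.castSucc = of fun i j =>
      (u i - a) / (1 - u i * b) * ((v j - b) / (1 - a * v j) * cauchyMatrix u v i j) := by
    ext i j
    simpa [B, c, A, cauchyMatrix] using cauchy_schur_entry (huv i j) (hub i) (hav j)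
  have hB_corner : B (Fin.last m) (Fin.last m) = (1 - a * b)⁻¹ := by
    simp [B, c, A, cauchyMatrix]
  have hB_minor : (B.submatrix Fin.castSucc Fin.castSucc).det =
      (∏ i, (u i - a) / (1 - u i * b)) *
        ((∏ j, (v j - b) / (1 - a * v j)) * (cauchyMatrix u v).det) := by
    rw [hB_sub]
    exact (det_mul_column _ (of fun i j => (v j - b) / (1 - a * v j) * cauchyMatrix u v i j)).trans
      (congrArg _ (det_mul_row _ (cauchyMatrix u v)))
  rw [hB, det_succ_of_column_last_eq_zero B hB_col, hB_minor, hB_corner]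

theorem det_cauchyMatrix {m : ℕ} (u v : Fin m → K) (h : ∀ i j, 1 - u i * v j ≠ 0) :
    (cauchyMatrix u v).det =
      (∏ p ∈ univ.filter (fun p : Fin m × Fin m => p.1 < p.2), (u p.1 - u p.2) * (v p.1 - v p.2)) /
        ∏ i, ∏ j, (1 - u i * v j) := by
  induction m with
  | zero => simp
  | succ m ih =>
    obtain ⟨u, a, rfl⟩ : ∃ u' a, u = Fin.snoc u' a := ⟨Fin.init u, _, (Fin.snoc_init_self u).symm⟩
    obtain ⟨v, b, rfl⟩ : ∃ v' b, v = Fin.snoc v' b := ⟨Fin.init v, _, (Fin.snoc_init_self v).symm⟩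
    have huv : ∀ i j, 1 - u i * v j ≠ 0 := by
      simpa using fun i j : Fin m => h i.castSucc j.castSucc
    have hub : ∀ i, 1 - u i * b ≠ 0 := by simpa using fun i : Fin m => h i.castSucc (Fin.last m)
    have hav : ∀ j, 1 - a * v j ≠ 0 := by simpa using fun j : Fin m => h (Fin.last m) j.castSucc
    have hab : 1 - a * b ≠ 0 := by simpa using h (Fin.last m) (Fin.last m)
    rw [det_cauchyMatrix_snoc u v a b huv hub hav hab, ih u v huv, prod_filter_lt_castSucc]
    simp only [Fin.prod_univ_castSucc, Fin.snoc_castSucc, Fin.snoc_last, prod_mul_distrib,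
      prod_div_distrib]
    have hub_prod : ∏ i, (1 - u i * b) ≠ 0 := prod_ne_zero_iff.2 fun i _ => hub i
    have hav_prod : ∏ j, (1 - a * v j) ≠ 0 := prod_ne_zero_iff.2 fun j _ => hav j
    have huv_prod : ∏ i, ∏ j, (1 - u i * v j) ≠ 0 :=
      prod_ne_zero_iff.2 fun i _ => prod_ne_zero_iff.2 fun j _ => huv i j
    field_simp

end Cauchy

lemma CppMat_map_eval_zero {K : Type*} [Field K] (n : ℕ) (x y : Fin n → K) (z : K) :
    (CppMat n x y z).map (Polynomial.evalRingHom 0) =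
      cauchyMatrix (Fin.snoc x z : Fin (n+1) → K) (Fin.snoc y z) := by
  ext i j
  induction i using Fin.lastCases <;> induction j using Fin.lastCases <;>
    simp [CppMat, cauchyMatrix, sq, mul_comm]

/-- the coefficient of `c⁰` in `det C''(c)`. -/
theorem stmt2 (n : ℕ) {K : Type*} [Field K] (x y : Fin n → K) (z : K)
    (hxy : ∀ i j, 1 - x i * y j ≠ 0) (hxz : ∀ i, 1 - x i * z ≠ 0)
    (hyz : ∀ j, 1 - y j * z ≠ 0) (hz : 1 - z^2 ≠ 0) :
    (Matrix.det (CppMat n x y z)).coeff 0 =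
      ((∏ p ∈ Finset.univ.filter (fun p : Fin n × Fin n => p.1 < p.2),
          (x p.1 - x p.2) * (y p.1 - y p.2)) *
        ∏ i, (x i - z) * (y i - z)) /
      ((∏ i, ∏ j, (1 - x i * y j)) * (∏ i, (1 - x i * z) * (1 - y i * z)) * (1 - z^2)) := by
  have h : ∀ i j,
      1 - (Fin.snoc x z : Fin (n+1) → K) i * (Fin.snoc y z : Fin (n+1) → K) j ≠ 0 := by
    intro i j
    induction i using Fin.lastCases <;> induction j using Fin.lastCases <;>
      simp [hxy, hxz, mul_comm z, hyz, ← sq, hz]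
  rw [Polynomial.coeff_zero_eq_eval_zero, ← Polynomial.coe_evalRingHom, RingHom.map_det,
    RingHom.mapMatrix_apply, CppMat_map_eval_zero, det_cauchyMatrix _ _ h, prod_filter_lt_castSucc]
  simp only [Fin.prod_univ_castSucc, Fin.snoc_castSucc, Fin.snoc_last, prod_mul_distrib,
    mul_comm z]
  ring
end

section
/- Let C''(c) be the (n+1)×(n+1) matrix with entries C''_{ij} = 1/(1 - xᵢyⱼ) for 1 ≤ i,j ≤ n, C''_{i,n+1} = 1/(1 - xᵢz), C''_{n+1,j} = 1/(1 - yⱼz), and C''_{n+1,n+1} = (1-c)/(1-z²). Then the coefficient of c¹ in det C''(c) equals -(1/(1-z²)) · ∏_{1≤i<j≤n}(xᵢ-xⱼ)(yᵢ-yⱼ) / ∏_{i,j=1}^n (1-xᵢyⱼ). -/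
open Finset Matrix

theorem Finset.prod_filter_fst_lt_snd {ι M : Type*} [Fintype ι] [Preorder ι]
    [LocallyFiniteOrderTop ι] [DecidableLT ι] [CommMonoid M] (f : ι → ι → M) :
    ∏ p ∈ univ.filter (fun p : ι × ι => p.1 < p.2), f p.1 p.2 =
      ∏ i, ∏ j ∈ Ioi i, f i j := by
  rw [prod_filter, Fintype.prod_prod_type]
  refine prod_congr rfl fun i _ => ?_
  rw [← prod_filter]
  congr 1
  ext j
  simp

namespace Matrix

theorem det_succ_eq_mul_det_schur {K : Type*} [Field K] {n : ℕ}
    (A : Matrix (Fin (n + 1)) (Fin (n + 1)) K) (h : A 0 0 ≠ 0) :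
    A.det = A 0 0 *
      det (of fun i j : Fin n => A i.succ j.succ - A i.succ 0 * A 0 j.succ / A 0 0) := by
  set B : Matrix (Fin (n + 1)) (Fin (n + 1)) K :=
    of fun i j => if i = 0 then A 0 j else A i j - A i 0 * A 0 j / A 0 0 with hB
  have hAB : A.det = B.det :=
    det_eq_of_forall_row_eq_smul_add_const (fun i => if i = 0 then 0 else A i 0 / A 0 0) 0
      (if_pos rfl) fun i j => by
        by_cases hi : i = 0
        · subst hi; simp [hB]
        · simp only [hB, of_apply, if_neg hi, if_true]
          ring
  rw [hAB, det_succ_column_zero, Fin.sum_univ_succ, Fintype.sum_eq_zero]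
  · simp [hB, Fin.succ_ne_zero, submatrix]
  · intro i
    simp [hB, Fin.succ_ne_zero, h]

theorem det_add_single_last {R : Type*} [CommRing R] {n : ℕ}
    (A : Matrix (Fin (n + 1)) (Fin (n + 1)) R) (t : R) :
    det (A + single (Fin.last n) (Fin.last n) t) =
      det A + t * det (A.submatrix Fin.castSucc Fin.castSucc) := by
  have hrow : A + single (Fin.last n) (Fin.last n) t =
      A.updateRow (Fin.last n) (A (Fin.last n) + t • Pi.single (Fin.last n) 1) := by
    ext i j
    by_cases hi : i = Fin.last n
    · subst hi
      rcases eq_or_ne j (Fin.last n) with rfl | hj <;> simp [*, Ne.symm]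
    · simp [hi, Ne.symm hi]
  rw [hrow, det_updateRow_add, updateRow_eq_self, det_updateRow_smul, ← adjugate_apply,
    adjugate_fin_succ_eq_det_submatrix]
  simp [Fin.succAbove_last]

theorem det_cauchy_succ {K : Type*} [Field K] {n : ℕ} (x y : Fin (n + 1) → K)
    (h : ∀ i j, 1 - x i * y j ≠ 0) :
    det (of fun i j => 1 / (1 - x i * y j)) =
      1 / (1 - x 0 * y 0) * ((∏ i : Fin n, (x i.succ - x 0) / (1 - x i.succ * y 0)) *
        ((∏ j : Fin n, (y j.succ - y 0) / (1 - x 0 * y j.succ)) *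
          det (of fun i j : Fin n => 1 / (1 - x i.succ * y j.succ)))) := by
  rw [det_succ_eq_mul_det_schur _ (by simpa using h 0 0), ← det_mul_row, ← det_mul_column]
  congr 2
  ext i j
  have h' : ∀ i j, 1 - y j * x i ≠ 0 := fun i j => mul_comm (x i) (y j) ▸ h i j
  have := h i.succ j.succ; have := h i.succ 0; have := h 0 j.succ
  have := h' i.succ j.succ; have := h' i.succ 0; have := h' 0 j.succ
  simp only [of_apply]
  field_simp
  ring

theorem det_cauchy {K : Type*} [Field K] {n : ℕ} (x y : Fin n → K)
    (h : ∀ i j, 1 - x i * y j ≠ 0) :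
    det (of fun i j => 1 / (1 - x i * y j)) =
      (∏ i, ∏ j ∈ Ioi i, (x i - x j) * (y i - y j)) / ∏ i, ∏ j, (1 - x i * y j) := by
  induction n with
  | zero => simp
  | succ n ih =>
    rw [det_cauchy_succ x y h, ih _ _ fun i j => h i.succ j.succ]
    have hnum : ∏ i, ∏ j ∈ Ioi i, (x i - x j) * (y i - y j) =
        (∏ i : Fin n, (x i.succ - x 0)) * (∏ j : Fin n, (y j.succ - y 0)) *
          ∏ i : Fin n, ∏ j ∈ Ioi i, (x i.succ - x j.succ) * (y i.succ - y j.succ) := by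
      rw [Fin.prod_univ_succ, Fin.prod_Ioi_zero]
      simp only [Fin.prod_Ioi_succ]
      congr 1
      rw [← prod_mul_distrib]
      exact prod_congr rfl fun j _ => by ring
    have hden : ∏ i, ∏ j, (1 - x i * y j) =
        (1 - x 0 * y 0) * (∏ i : Fin n, (1 - x i.succ * y 0)) *
          (∏ j : Fin n, (1 - x 0 * y j.succ)) *
          ∏ i : Fin n, ∏ j : Fin n, (1 - x i.succ * y j.succ) := by
      simp only [Fin.prod_univ_succ (n := n), prod_mul_distrib]
      ring
    have hx : ∏ i : Fin n, (1 - x i.succ * y 0) ≠ 0 := prod_ne_zero_iff.2 fun i _ => h i.succ 0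
    have hy : ∏ j : Fin n, (1 - x 0 * y j.succ) ≠ 0 := prod_ne_zero_iff.2 fun j _ => h 0 j.succ
    have hxy : ∏ i : Fin n, ∏ j : Fin n, (1 - x i.succ * y j.succ) ≠ 0 :=
      prod_ne_zero_iff.2 fun i _ => prod_ne_zero_iff.2 fun j _ => h i.succ j.succ
    have h00 := h 0 0
    rw [hnum, hden, prod_div_distrib, prod_div_distrib]
    field_simp

end Matrix

section

open Polynomial

theorem Polynomial.coeff_one_det_map_C_add_single_last {R : Type*} [CommRing R] {n : ℕ}
    (B : Matrix (Fin (n + 1)) (Fin (n + 1)) R) (t : R) :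
    (det (B.map C + single (Fin.last n) (Fin.last n) (C t * X))).coeff 1 =
      t * det (B.submatrix Fin.castSucc Fin.castSucc) := by
  have det_map_C (m : ℕ) (M : Matrix (Fin m) (Fin m) R) : (M.map C).det = C M.det :=
    (C.map_det M).symm
  rw [det_add_single_last, submatrix_map, det_map_C, det_map_C, coeff_add, coeff_C,
    if_neg one_ne_zero, zero_add, mul_right_comm, ← C_mul, coeff_C_mul_X, if_pos rfl]

theorem CppMat_eq_map_C_add_single_last (n : ℕ) {K : Type*} [Field K] (x y : Fin n → K)
    (z : K) :
    CppMat n x y z = ((CppMat n x y z).map (eval 0)).map C +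
      single (Fin.last n) (Fin.last n) (C (-(1 / (1 - z ^ 2))) * X) := by
  ext i j : 1
  induction i using Fin.lastCases <;> induction j using Fin.lastCases <;>
    simp [CppMat, Ne.symm (Fin.castSucc_ne_last _)]
  ring

theorem CppMat_submatrix_castSucc (n : ℕ) {K : Type*} [Field K] (x y : Fin n → K) (z : K) :
    ((CppMat n x y z).map (eval 0)).submatrix Fin.castSucc Fin.castSucc =
      of fun i j => 1 / (1 - x i * y j) := by
  ext i j
  simp [CppMat]

end

theorem stmt3_general (n : ℕ) {K : Type*} [Field K] (x y : Fin n → K) (z : K)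
    (hxy : ∀ i j, 1 - x i * y j ≠ 0) :
    (Matrix.det (CppMat n x y z)).coeff 1 =
      -(1 / (1 - z^2)) *
        ((∏ p ∈ Finset.univ.filter (fun p : Fin n × Fin n => p.1 < p.2),
            (x p.1 - x p.2) * (y p.1 - y p.2)) /
          ∏ i, ∏ j, (1 - x i * y j)) := by
  rw [CppMat_eq_map_C_add_single_last, Polynomial.coeff_one_det_map_C_add_single_last,
    CppMat_submatrix_castSucc, det_cauchy x y hxy,
    prod_filter_fst_lt_snd fun i j => (x i - x j) * (y i - y j)]

/-- the coefficient of `c¹` in `det C''(c)`. -/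
theorem stmt3 (n : ℕ) {K : Type*} [Field K] (x y : Fin n → K) (z : K)
    (hxy : ∀ i j, 1 - x i * y j ≠ 0) (hxz : ∀ i, 1 - x i * z ≠ 0)
    (hyz : ∀ j, 1 - y j * z ≠ 0) (hz : 1 - z^2 ≠ 0) :
    (Matrix.det (CppMat n x y z)).coeff 1 =
      -(1 / (1 - z^2)) *
        ((∏ p ∈ Finset.univ.filter (fun p : Fin n × Fin n => p.1 < p.2),
            (x p.1 - x p.2) * (y p.1 - y p.2)) /
          ∏ i, ∏ j, (1 - x i * y j)) :=
  stmt3_general n x y z hxy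
end

section
/- Let V''(c) be the (2n+1)×(2n+1) matrix with rows: for 1 ≤ i ≤ n, V''_{i,j} = xᵢ^{j-1}; for 1 ≤ i ≤ n, V''_{n+i,j} = yᵢ^{j-1}; and V''_{2n+1,j} = z^{j-1} - c·z^{2n+1-j}. Then the coefficient of c⁰ in det V''(c) equals ∏_{1≤i<j≤n}(xⱼ-xᵢ)(yⱼ-yᵢ) · ∏_{i,j=1}^n (yⱼ-xᵢ) · ∏_{i=1}^n (z-xᵢ)(z-yᵢ), and the coefficient of c¹ equals -z^{2n} · ∏_{1≤i<j≤n}(xⱼ-xᵢ)(yⱼ-yᵢ) · ∏_{i,j=1}^n (yⱼ-xᵢ) · ∏_{i=1}^n (z⁻¹-xᵢ)(z⁻¹-yᵢ). -/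
/-!
Away from its last row, `V''(c)` is the Vandermonde matrix of the nodes `x₁, …, xₙ, y₁, …, yₙ`;
for `z ≠ 0` its last row is `z^(j-1) - c · z^(2n) · (z⁻¹)^(j-1)`. The determinant is linear in
that row, so `det V''(c) = V(x, y, z) - c · z^(2n) · V(x, y, z⁻¹)`, with `V` the Vandermonde
determinant of the node vector. Splitting the pairs `i < j` of nodes according to the blocks
`x`, `y`, `z` factors `V(x, y, w)` into the products of the statement.
-/

open Polynomial in
/-- The matrix `V''(c)` with `c` an indeterminate (`Polynomial.X`). -/
noncomputable def VppMat (n : ℕ) {K : Type*} [Field K] (x y : Fin n → K) (z : K) :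
    Matrix (Fin (2*n+1)) (Fin (2*n+1)) (Polynomial K) :=
  Matrix.of fun i j =>
    if hi : (i : ℕ) < n then C (x ⟨i, hi⟩ ^ (j : ℕ))
    else if hi2 : (i : ℕ) < 2*n then C (y ⟨(i : ℕ) - n, by omega⟩ ^ (j : ℕ))
    else C (z ^ (j : ℕ)) - C (z ^ (2*n - (j : ℕ))) * X

open Finset Matrix Polynomial

theorem Fin.prod_filter_lt_add {M : Type*} [CommMonoid M] {a b : ℕ}
    (f : Fin (a + b) → Fin (a + b) → M) :
    ∏ p ∈ univ.filter (fun p : Fin (a + b) × Fin (a + b) => p.1 < p.2), f p.1 p.2 =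
      (∏ p ∈ univ.filter (fun p : Fin a × Fin a => p.1 < p.2),
          f (castAdd b p.1) (castAdd b p.2)) *
        (∏ p ∈ univ.filter (fun p : Fin b × Fin b => p.1 < p.2),
          f (natAdd a p.1) (natAdd a p.2)) *
        ∏ i, ∏ j, f (castAdd b i) (natAdd a j) := by
  have castAdd_lt_castAdd (i j : Fin a) : castAdd b i < castAdd b j ↔ i < j :=
    castLE_lt_castLE_iff _
  have castAdd_lt_natAdd (i : Fin a) (j : Fin b) : castAdd b i < natAdd a j :=
    Fin.lt_def.2 (by simp only [val_castAdd, val_natAdd]; omega)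
  have natAdd_not_lt_castAdd (i : Fin b) (j : Fin a) : ¬ natAdd a i < castAdd b j :=
    (castAdd_lt_natAdd j i).not_gt
  simp only [prod_filter, Fintype.prod_prod_type, Fin.prod_univ_add, prod_mul_distrib,
    castAdd_lt_castAdd, natAdd_lt_natAdd_iff, castAdd_lt_natAdd, natAdd_not_lt_castAdd,
    if_true, if_false, prod_const_one, mul_one]
  ac_rfl

namespace Matrix

variable {R : Type*} [CommRing R]

theorem det_vandermonde_eq_prod_filter_lt {m : ℕ} (v : Fin m → R) :
    (vandermonde v).det =
      ∏ p ∈ univ.filter (fun p : Fin m × Fin m => p.1 < p.2), (v p.2 - v p.1) := by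
  rw [det_vandermonde, prod_filter, Fintype.prod_prod_type]
  exact prod_congr rfl fun i _ => by rw [← prod_filter, filter_lt_eq_Ioi]

theorem det_vandermonde_append {a b : ℕ} (u : Fin a → R) (v : Fin b → R) :
    (vandermonde (Fin.append u v)).det =
      (vandermonde u).det * (vandermonde v).det * ∏ i, ∏ j, (v j - u i) := by
  simp only [det_vandermonde_eq_prod_filter_lt,
    Fin.prod_filter_lt_add (fun i j => Fin.append u v j - Fin.append u v i), Fin.append_left,
    Fin.append_right]

theorem det_vandermonde_snoc {m : ℕ} (u : Fin m → R) (w : R) :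
    (vandermonde (Fin.snoc u w : Fin (m + 1) → R)).det =
      (vandermonde u).det * ∏ i, (w - u i) := by
  rw [← Fin.append_right_eq_snoc u (fun _ : Fin 1 => w), det_vandermonde_append]
  simp

theorem det_vandermonde_comp_cast {m m' : ℕ} (h : m = m') (v : Fin m' → R) :
    (vandermonde (v ∘ Fin.cast h)).det = (vandermonde v).det := by
  subst h
  rfl

theorem updateRow_vandermonde_snoc {m : ℕ} (u : Fin m → R) (a b : R) :
    updateRow (vandermonde (Fin.snoc u a : Fin (m + 1) → R)) (Fin.last m)
        (fun j => b ^ (j : ℕ)) =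
      vandermonde (Fin.snoc u b) := by
  ext i j
  induction i using Fin.lastCases with
  | last => simp
  | cast k => simp

theorem det_updateRow_C_sub_C_mul_X {ι : Type*} [Fintype ι] [DecidableEq ι]
    (M : Matrix ι ι R) (i : ι) (r s : ι → R) (d : R) :
    (updateRow (M.map C) i (fun j => C (r j) - C (d * s j) * X)).det =
      C (updateRow M i r).det - C (d * (updateRow M i s).det) * X := by
  have hrow : (fun j => C (r j) - C (d * s j) * X) = C ∘ r + (-(C d * X)) • (C ∘ s) := by
    ext1 j
    simp only [Function.comp_apply, Pi.add_apply, Pi.smul_apply, smul_eq_mul, C_mul]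
    ring
  rw [hrow, det_updateRow_add, det_updateRow_smul, ← map_updateRow, ← map_updateRow,
    ← RingHom.mapMatrix_apply, ← RingHom.mapMatrix_apply, ← RingHom.map_det, ← RingHom.map_det,
    C_mul]
  ring

end Matrix

def vppNodes {α : Type*} {n : ℕ} (x y : Fin n → α) : Fin (2 * n) → α :=
  Fin.append x y ∘ Fin.cast (two_mul n)

theorem vppNodes_apply {α : Type*} {n : ℕ} (x y : Fin n → α) (k : Fin (2 * n)) :
    vppNodes x y k = if h : (k : ℕ) < n then x ⟨k, h⟩ else y ⟨k - n, by omega⟩ := by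
  simp only [vppNodes, Fin.append, Function.comp_apply, Fin.addCases, Fin.val_cast,
    Fin.cast_eq_self, eq_rec_constant]
  split_ifs <;> rfl

section VppMat

variable {K : Type*} [Field K] {n : ℕ}

theorem VppMat_eq_updateRow (x y : Fin n → K) {z : K} (hz : z ≠ 0) :
    VppMat n x y z =
      updateRow ((vandermonde (Fin.snoc (vppNodes x y) z)).map C) (Fin.last (2 * n))
        (fun j => C (z ^ (j : ℕ)) - C (z ^ (2 * n) * z⁻¹ ^ (j : ℕ)) * X) := by
  ext i j : 1
  induction i using Fin.lastCases with
  | last =>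
    have h2n : ¬ 2 * n < n := by omega
    simp only [VppMat, of_apply, updateRow_self, Fin.val_last]
    rw [dif_neg h2n, dif_neg (lt_irrefl _), pow_sub₀ z hz (Fin.is_le j), inv_pow]
  | cast k => simp [VppMat, vppNodes_apply, apply_dite C]

theorem det_VppMat (x y : Fin n → K) {z : K} (hz : z ≠ 0) :
    (VppMat n x y z).det =
      C (vandermonde (Fin.snoc (vppNodes x y) z)).det -
        C (z ^ (2 * n) * (vandermonde (Fin.snoc (vppNodes x y) z⁻¹)).det) * X := by
  rw [VppMat_eq_updateRow x y hz,
    det_updateRow_C_sub_C_mul_X _ _ (fun j : Fin (2 * n + 1) => z ^ (j : ℕ))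
      (fun j => z⁻¹ ^ (j : ℕ)),
    updateRow_vandermonde_snoc, updateRow_vandermonde_snoc]

theorem det_vandermonde_snoc_vppNodes (x y : Fin n → K) (w : K) :
    (vandermonde (Fin.snoc (vppNodes x y) w)).det =
      (∏ p ∈ univ.filter (fun p : Fin n × Fin n => p.1 < p.2),
          (x p.2 - x p.1) * (y p.2 - y p.1)) *
        (∏ i, ∏ j, (y j - x i)) * ∏ i, (w - x i) * (w - y i) := by
  rw [det_vandermonde_snoc, vppNodes, det_vandermonde_comp_cast, det_vandermonde_append,
    det_vandermonde_eq_prod_filter_lt, det_vandermonde_eq_prod_filter_lt, prod_mul_distrib,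
    prod_mul_distrib, Function.comp_def, Fin.prod_congr' (fun i => w - Fin.append x y i),
    Fin.prod_univ_add]
  simp only [Fin.append_left, Fin.append_right]

end VppMat

/-- the coefficients of `c⁰` and `c¹` in `det V''(c)`. -/
theorem stmt5 (n : ℕ) {K : Type*} [Field K] (x y : Fin n → K) (z : K) (hz : z ≠ 0) :
    (Matrix.det (VppMat n x y z)).coeff 0 =
      (∏ p ∈ Finset.univ.filter (fun p : Fin n × Fin n => p.1 < p.2),
          (x p.2 - x p.1) * (y p.2 - y p.1)) *
        (∏ i, ∏ j, (y j - x i)) * ∏ i, (z - x i) * (z - y i)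
    ∧
    (Matrix.det (VppMat n x y z)).coeff 1 =
      -(z ^ (2*n)) *
        ((∏ p ∈ Finset.univ.filter (fun p : Fin n × Fin n => p.1 < p.2),
            (x p.2 - x p.1) * (y p.2 - y p.1)) *
          (∏ i, ∏ j, (y j - x i)) * ∏ i, (z⁻¹ - x i) * (z⁻¹ - y i)) := by
  rw [det_VppMat x y hz, det_vandermonde_snoc_vppNodes, det_vandermonde_snoc_vppNodes]
  constructor
  · simp only [coeff_sub, coeff_C_zero, coeff_C_mul_X, zero_ne_one, if_false, sub_zero]
  · simp only [coeff_sub, coeff_C, coeff_C_mul_X, one_ne_zero, if_true, if_false, zero_sub,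
      neg_mul]
end

section
/- Specialization of even symplectic characters: let λ be a partition of length ≤ n with λ₁ ≤ r, and Sp_{2n}(λ; x₁,…,xₙ) the symplectic Schur function (Weyl character of Sp(2n)). Then (x₁⋯xₙ)^r Sp_{2n}(λ; x₁,…,xₙ) is a polynomial in x₁,…,xₙ, and its evaluation at x₁ = 0 equals (x₂⋯xₙ)^r Sp_{2(n-1)}((λ₂,…,λₙ); x₂,…,xₙ) if λ₁ = r, and 0 if λ₁ < r. -/
/-- The symplectic (even) bialternant matrix: `(i,j)` entry
`xᵢ^{λⱼ+n+1-j} - xᵢ^{-(λⱼ+n+1-j)}` (with `1`-based `i, j`). -/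
noncomputable def spEvenMat (n : ℕ) {K : Type*} [Field K]
    (lam : Fin n → ℕ) (x : Fin n → K) : Matrix (Fin n) (Fin n) K :=
  Matrix.of fun i j =>
    x i ^ ((lam j : ℤ) + n - (j : ℕ)) - x i ^ (-((lam j : ℤ) + n - (j : ℕ)))

/-- The symplectic Schur function `Sp_{2n}(λ; x₁,…,xₙ)` (Weyl character of `Sp(2n)`). -/
noncomputable def spEven (n : ℕ) {K : Type*} [Field K]
    (lam : Fin n → ℕ) (x : Fin n → K) : K :=
  Matrix.det (spEvenMat n lam x) / Matrix.det (spEvenMat n (fun _ => 0) x)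

/-!
Multiplying row `i` of the bialternant by `xᵢ^N` turns both determinants into polynomial
determinants `det (Xᵢ^(N + eⱼ) - Xᵢ^(N - eⱼ))`. Row operations show that each of `Xᵢ² - 1`,
`Xᵢ - Xⱼ` and `XᵢXⱼ - 1` divides every such determinant, and these factors are irreducible and
pairwise coprime, so their product `W` (the Weyl denominator with negative powers cleared)
divides it. For the denominator (`λ = 0`, `N = n + 1`) both sides have the same total degree, so
it is a nonzero constant multiple of `W`, and dividing the numerator by it gives a polynomial `q`
with `(x₁⋯xₙ₊₁)^λ₁ Sp(λ; x) = q(x)`; take `P = (X₁⋯Xₙ₊₁)^(r - λ₁) q`. At `x₁ = 0` the first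
row of a cleared matrix with `N = e₁` becomes `(-1, 0, …, 0)`, so both determinants reduce to
their `n`-variable versions times `-(x₂⋯xₙ₊₁)`, and `q` specializes to the quotient for
`(λ₂, …, λₙ₊₁)`.
-/

open MvPolynomial

namespace Matrix

variable {R : Type*} [CommRing R] {ι : Type*} [Fintype ι] [DecidableEq ι]

theorem dvd_det_of_dvd_row (M : Matrix ι ι R) (i : ι) {a : R} (h : ∀ k, a ∣ M i k) :
    a ∣ M.det := by
  rw [det_apply]
  refine Finset.dvd_sum fun σ _ => ?_
  rw [Units.smul_def, zsmul_eq_mul]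
  refine dvd_mul_of_dvd_right ((h (σ⁻¹ i)).trans ?_) _
  simpa using Finset.dvd_prod_of_mem (fun k => M (σ k) k) (Finset.mem_univ (σ⁻¹ i))

theorem dvd_det_of_dvd_row_add_mul (M : Matrix ι ι R) {i j : ι} (hij : i ≠ j) (c : R) {a : R}
    (h : ∀ k, a ∣ M i k + c * M j k) : a ∣ M.det := by
  rw [← det_updateRow_add_smul_self M hij c]
  exact dvd_det_of_dvd_row _ i fun k => by simpa using h k

end Matrix

namespace MvPolynomial

variable {R σ : Type*} [CommRing R]

theorem totalDegree_det_le {ι : Type*} [Fintype ι] [DecidableEq ι]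
    (M : Matrix ι ι (MvPolynomial σ R)) (d : ι → ℕ) (h : ∀ i j, (M i j).totalDegree ≤ d j) :
    M.det.totalDegree ≤ ∑ j, d j := by
  rw [Matrix.det_apply]
  refine (totalDegree_finsetSum _ _).trans (Finset.sup_le fun τ _ => ?_)
  refine (totalDegree_smul_le _ _).trans ((totalDegree_finsetProd _ _).trans ?_)
  exact Finset.sum_le_sum fun j _ => h _ j

theorem not_dvd_of_eval_eq_zero {p q : MvPolynomial σ R} (x : σ → R) (hp : eval x p = 0)
    (hq : eval x q ≠ 0) : ¬ p ∣ q := by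
  rintro ⟨s, rfl⟩
  simp [hp] at hq

theorem totalDegree_X_sub_X [Nontrivial R] {i j : σ} (hij : i ≠ j) :
    (X i - X j : MvPolynomial σ R).totalDegree = 1 := by
  refine le_antisymm ((totalDegree_sub _ _).trans (by simp)) ?_
  simpa using le_totalDegree (s := Finsupp.single i 1) (p := X i - X j)
    (by classical simp [mem_support_iff, coeff_X, Finsupp.single_left_inj one_ne_zero, hij.symm])

variable [IsDomain R]

theorem totalDegree_prod_of_isDomain {ι : Type*} (s : Finset ι) (f : ι → MvPolynomial σ R)
    (h : ∀ i ∈ s, f i ≠ 0) : (∏ i ∈ s, f i).totalDegree = ∑ i ∈ s, (f i).totalDegree := by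
  classical
  induction s using Finset.induction_on with
  | empty => simp
  | insert a s ha ih =>
    rw [Finset.forall_mem_insert] at h
    rw [Finset.prod_insert ha, Finset.sum_insert ha,
      totalDegree_mul_of_isDomain h.1 (Finset.prod_ne_zero_iff.mpr h.2), ih h.2]

theorem irreducible_X_sub (i : σ) {p : MvPolynomial σ R} (hp : i ∉ p.vars) :
    Irreducible (X i - p) := by
  simpa [sub_eq_add_neg] using
    irreducible_mul_X_add 1 (-p) i one_ne_zero (by simp) (by rwa [vars_neg]) isRelPrime_one_left

theorem irreducible_X_mul_X_sub_one {i j : σ} (hij : i ≠ j) :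
    Irreducible (X i * X j - 1 : MvPolynomial σ R) := by
  simpa [sub_eq_add_neg, mul_comm] using
    irreducible_mul_X_add (X j) (-1) i (X_ne_zero j) (by simp [hij]) (by simp)
      (IsUnit.isRelPrime_right isUnit_one.neg)

end MvPolynomial

namespace Symplectic

open Matrix

section Factors

variable (R : Type*) [CommRing R] {m : ℕ}

def spExp (lam : Fin m → ℕ) (j : Fin m) : ℕ := lam j + (m - j)

theorem spExp_succ {n : ℕ} (lam : Fin (n + 1) → ℕ) :
    (fun j : Fin n => spExp lam j.succ) = spExp fun j => lam j.succ := by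
  funext j
  simp [spExp]

-- Row `i` of the bialternant with exponents `e`, multiplied by `Xᵢ ^ N`.
noncomputable def clearedMat (N : ℕ) (e : Fin m → ℕ) :
    Matrix (Fin m) (Fin m) (MvPolynomial (Fin m) R) :=
  of fun i j => X i ^ (N + e j) - X i ^ (N - e j)

variable {R} {N : ℕ} {e : Fin m → ℕ}

theorem X_sq_sub_one_dvd_det_clearedMat (he : ∀ j, e j ≤ N) (i : Fin m) :
    X i ^ 2 - 1 ∣ (clearedMat R N e).det :=
  dvd_det_of_dvd_row _ i fun k => by
    have hk : X i ^ (N + e k) - X i ^ (N - e k) =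
        X i ^ (N - e k) * ((X i ^ 2) ^ e k - 1 : MvPolynomial (Fin m) R) := by
      rw [mul_sub, ← pow_mul, ← pow_add, mul_one, show N - e k + 2 * e k = N + e k by grind]
    simpa [clearedMat, hk] using dvd_mul_of_dvd_right (sub_one_dvd_pow_sub_one _ _) _

theorem X_sub_X_dvd_det_clearedMat {i j : Fin m} (hij : i ≠ j) :
    X i - X j ∣ (clearedMat R N e).det :=
  dvd_det_of_dvd_row_add_mul _ hij (-1) fun k => by
    convert dvd_sub (sub_dvd_pow_sub_pow (X i) (X j) (N + e k))
      (sub_dvd_pow_sub_pow (X i) (X j) (N - e k)) using 1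
    simp only [clearedMat, of_apply]
    ring

theorem X_mul_X_sub_one_dvd_det_clearedMat (he : ∀ j, e j ≤ N) {i j : Fin m} (hij : i ≠ j) :
    X i * X j - 1 ∣ (clearedMat R N e).det :=
  -- `row i + Xᵢ ^ (2N) • row j` vanishes where `XᵢXⱼ = 1`.
  dvd_det_of_dvd_row_add_mul _ hij (X i ^ (2 * N)) fun k => by
    have hXX := sub_one_dvd_pow_sub_one (X i * X j : MvPolynomial (Fin m) R)
    convert dvd_sub ((hXX (N + e k)).mul_left (X i ^ (N - e k)))
      ((hXX (N - e k)).mul_left (X i ^ (N + e k))) using 1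
    simp only [clearedMat, of_apply]
    rw [mul_pow, mul_pow, show 2 * N = N - e k + (N + e k) by grind, pow_add]
    ring

end Factors

section Coprime

variable {R : Type*} [CommRing R] [IsDomain R] {m : ℕ}

theorem isRelPrime_X_sub_X {q : MvPolynomial (Fin m) R} {i j : Fin m} (hij : i ≠ j)
    (hq : eval 0 q ≠ 0) : IsRelPrime (X i - X j) q :=
  (irreducible_X_sub i (by simp [hij])).isRelPrime_iff_not_dvd.mpr
    (not_dvd_of_eval_eq_zero 0 (by simp) hq)

theorem isRelPrime_X_sub_X_X_sub_X {i j k l : Fin m} (hij : i ≠ j) (hkl : k ≠ l)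
    (h : (k ≠ i ∧ k ≠ j) ∨ (l ≠ i ∧ l ≠ j)) :
    IsRelPrime (X i - X j) (X k - X l : MvPolynomial (Fin m) R) := by
  refine (irreducible_X_sub i (by simp [hij])).isRelPrime_iff_not_dvd.mpr ?_
  rcases h with ⟨hki, hkj⟩ | ⟨hli, hlj⟩
  · exact not_dvd_of_eval_eq_zero (Pi.single k 1) (by simp [hki.symm, hkj.symm])
      (by simp [hkl.symm])
  · exact not_dvd_of_eval_eq_zero (Pi.single l 1) (by simp [hli.symm, hlj.symm])
      (by simp [hkl])

theorem isRelPrime_X_mul_X_sub_one {i j k l : Fin m} (hij : i ≠ j)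
    (h : (k ≠ i ∧ k ≠ j) ∨ (l ≠ i ∧ l ≠ j)) :
    IsRelPrime (X i * X j - 1) (X k * X l - 1 : MvPolynomial (Fin m) R) := by
  refine (irreducible_X_mul_X_sub_one hij).isRelPrime_iff_not_dvd.mpr
    (not_dvd_of_eval_eq_zero (fun s => if s = i ∨ s = j then 1 else 0) (by simp) ?_)
  rcases h with ⟨hki, hkj⟩ | ⟨hli, hlj⟩ <;> simp [*]

variable [UniqueFactorizationMonoid R]

theorem isRelPrime_X_sq_sub_one {q : MvPolynomial (Fin m) R} (i : Fin m)
    (hq : ∀ c : R, eval (Pi.single i c) q ≠ 0) : IsRelPrime (X i ^ 2 - 1) q := by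
  have hfac : (X i ^ 2 - 1 : MvPolynomial (Fin m) R) = (X i - C 1) * (X i - C (-1)) := by
    simp only [map_neg, map_one]
    ring
  have hrel (c : R) : IsRelPrime (X i - C c) q :=
    (irreducible_X_sub i (by simp)).isRelPrime_iff_not_dvd.mpr
      (not_dvd_of_eval_eq_zero (Pi.single i c) (by simp) (hq c))
  rw [hfac]
  exact (hrel 1).mul_left (hrel (-1))

end Coprime

section Weyl

variable (R : Type*) [CommRing R] (m : ℕ)

def ltPairs : Finset (Fin m × Fin m) := {p | p.1 < p.2}

-- `(x₁⋯xₘ)^m ∏ᵢ (xᵢ - xᵢ⁻¹) ∏_{i<j} (xᵢ + xᵢ⁻¹ - xⱼ - xⱼ⁻¹)`, the Weyl denominator of `Sp(2m)`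
-- with its negative powers cleared.
noncomputable def weylDenom : MvPolynomial (Fin m) R :=
  (∏ i, (X i ^ 2 - 1)) * (∏ p ∈ ltPairs m, (X p.1 - X p.2)) *
    ∏ p ∈ ltPairs m, (X p.1 * X p.2 - 1)

variable {m}

theorem mem_ltPairs {p : Fin m × Fin m} : p ∈ ltPairs m ↔ p.1 < p.2 := by
  simp [ltPairs]

theorem card_ltPairs : (ltPairs m).card = m.choose 2 := by
  simpa [ltPairs] using Fintype.card_product_filter_lt (α := Fin m)

theorem ltPairs_fst_or_snd_avoids {p q : Fin m × Fin m} (hp : p ∈ ltPairs m) (hq : q ∈ ltPairs m)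
    (hpq : p ≠ q) : (q.1 ≠ p.1 ∧ q.1 ≠ p.2) ∨ (q.2 ≠ p.1 ∧ q.2 ≠ p.2) := by
  rw [mem_ltPairs] at hp hq
  rw [Ne, Prod.ext_iff] at hpq
  omega

variable {R} [IsDomain R] [UniqueFactorizationMonoid R]

theorem weylDenom_dvd_det_clearedMat {N : ℕ} {e : Fin m → ℕ} (he : ∀ j, e j ≤ N) :
    weylDenom R m ∣ (clearedMat R N e).det := by
  have hA : ∏ i, (X i ^ 2 - 1) ∣ (clearedMat R N e).det :=
    Finset.prod_dvd_of_isRelPrime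
      (fun i _ k _ hik => isRelPrime_X_sq_sub_one i fun c => by simp [Ne.symm hik])
      fun i _ => X_sq_sub_one_dvd_det_clearedMat he i
  have hP : ∏ p ∈ ltPairs m, (X p.1 - X p.2) ∣ (clearedMat R N e).det :=
    Finset.prod_dvd_of_isRelPrime
      (fun p hp q hq hpq => isRelPrime_X_sub_X_X_sub_X (mem_ltPairs.mp hp).ne
        (mem_ltPairs.mp hq).ne (ltPairs_fst_or_snd_avoids hp hq hpq))
      fun p hp => X_sub_X_dvd_det_clearedMat (mem_ltPairs.mp hp).ne
  have hQ : ∏ p ∈ ltPairs m, (X p.1 * X p.2 - 1) ∣ (clearedMat R N e).det :=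
    Finset.prod_dvd_of_isRelPrime
      (fun p hp q hq hpq => isRelPrime_X_mul_X_sub_one (mem_ltPairs.mp hp).ne
        (ltPairs_fst_or_snd_avoids hp hq hpq))
      fun p hp => X_mul_X_sub_one_dvd_det_clearedMat he (mem_ltPairs.mp hp).ne
  have hAP : IsRelPrime (∏ i, (X i ^ 2 - 1) : MvPolynomial (Fin m) R)
      (∏ p ∈ ltPairs m, (X p.1 - X p.2)) :=
    IsRelPrime.prod_left fun i _ => IsRelPrime.prod_right fun p hp =>
      (isRelPrime_X_sub_X (mem_ltPairs.mp hp).ne (by simp)).symm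
  have hAQ : IsRelPrime (∏ i, (X i ^ 2 - 1) : MvPolynomial (Fin m) R)
      (∏ p ∈ ltPairs m, (X p.1 * X p.2 - 1)) :=
    IsRelPrime.prod_left fun i _ => IsRelPrime.prod_right fun p hp =>
      isRelPrime_X_sq_sub_one i fun c => by
        rcases eq_or_ne p.1 i with rfl | h <;> simp [*, (mem_ltPairs.mp hp).ne']
  have hPQ : IsRelPrime (∏ p ∈ ltPairs m, (X p.1 - X p.2) : MvPolynomial (Fin m) R)
      (∏ p ∈ ltPairs m, (X p.1 * X p.2 - 1)) :=
    IsRelPrime.prod_left fun p hp => IsRelPrime.prod_right fun _ _ =>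
      isRelPrime_X_sub_X (mem_ltPairs.mp hp).ne (by simp)
  exact (hAQ.mul_left hPQ).mul_dvd (hAP.mul_dvd hA hP) hQ

end Weyl

section Specialization

variable (R : Type*) [CommRing R] (n : ℕ)

noncomputable def zeroFirst : MvPolynomial (Fin (n + 1)) R →+* MvPolynomial (Fin n) R :=
  eval₂Hom C (Fin.cons 0 X)

variable {R n}

@[simp]
theorem zeroFirst_X_zero : zeroFirst R n (X 0) = 0 := by
  simp [zeroFirst]

@[simp]
theorem zeroFirst_X_succ (i : Fin n) : zeroFirst R n (X i.succ) = X i := by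
  simp [zeroFirst]

theorem eval_zeroFirst {x : Fin (n + 1) → R} (hx : x 0 = 0) (f : MvPolynomial (Fin (n + 1)) R) :
    eval (fun i => x i.succ) (zeroFirst R n f) = eval x f := by
  suffices (eval fun i => x i.succ).comp (zeroFirst R n) = eval x from RingHom.congr_fun this f
  refine ringHom_ext (fun r => by simp [zeroFirst]) fun i => ?_
  cases i using Fin.cases <;> simp [hx]

theorem zeroFirst_det_clearedMat {N : ℕ} {e : Fin (n + 1) → ℕ} (h0 : e 0 = N + 1)
    (hle : ∀ j : Fin n, e j.succ ≤ N) :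
    zeroFirst R n (clearedMat R (N + 1) e).det =
      -((∏ i, X i) * (clearedMat R N fun j => e j.succ).det) := by
  -- Since `e 0 = N + 1` is the largest exponent, the first row becomes `(-1, 0, …, 0)`.
  have hrow (j : Fin n) : zeroFirst R n (clearedMat R (N + 1) e 0 j.succ) = 0 := by
    simp [clearedMat, zero_pow (show N + 1 - e j.succ ≠ 0 by grind)]
  have hminor : ((zeroFirst R n).mapMatrix (clearedMat R (N + 1) e)).submatrix Fin.succ
      (Fin.succAbove 0) = of fun i j => X i * clearedMat R N (fun j => e j.succ) i j := by
    ext i j : 1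
    simp only [clearedMat, submatrix_apply, Fin.succAbove_zero, RingHom.mapMatrix_apply,
      map_apply, of_apply, map_sub, map_pow, zeroFirst_X_succ]
    rw [show N + 1 + e j.succ = N + e j.succ + 1 by grind,
      show N + 1 - e j.succ = N - e j.succ + 1 by grind, pow_succ, pow_succ]
    ring
  rw [RingHom.map_det, det_succ_row_zero, Fin.sum_univ_succ,
    Finset.sum_eq_zero fun j _ => by simp [hrow], hminor, det_mul_column]
  simp [clearedMat, h0]

end Specialization

section Denominator

variable (R : Type*) [CommRing R] (m : ℕ)

noncomputable def clearedDenom : MvPolynomial (Fin m) R :=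
  (clearedMat R m (spExp fun _ : Fin m => 0)).det

variable {R m}

theorem zeroFirst_clearedDenom {n : ℕ} :
    zeroFirst R n (clearedDenom R (n + 1)) = -((∏ i, X i) * clearedDenom R n) := by
  rw [clearedDenom, zeroFirst_det_clearedMat (N := n) (by simp [spExp]) fun j => by
    simp [spExp], spExp_succ, clearedDenom]

theorem sum_add_spExp_zero :
    ∑ j : Fin m, (m + spExp (fun _ => 0) j) = 2 * m + 3 * m.choose 2 := by
  simp only [spExp, zero_add]
  rw [Fin.sum_univ_eq_sum_range (fun j => m + (m - j))]
  induction m with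
  | zero => simp
  | succ n ih =>
    have hshift : ∑ j ∈ Finset.range n, (n + 1 + (n + 1 - j)) =
        ∑ j ∈ Finset.range n, (n + (n - j)) + 2 * n := by
      rw [Finset.sum_congr rfl fun j hj => show n + 1 + (n + 1 - j) = n + (n - j) + 2 by grind,
        Finset.sum_add_distrib, Finset.sum_const, Finset.card_range, smul_eq_mul, mul_comm]
    rw [Finset.sum_range_succ, hshift, ih, Nat.choose_succ_succ', Nat.choose_one_right]
    grind

variable [IsDomain R]

theorem det_clearedMat_eq_clearedDenom_mul_zeroFirst {n N : ℕ} {lam : Fin (n + 1) → ℕ}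
    (h0 : spExp lam 0 = N + 1) (hle : ∀ j, spExp (fun j => lam j.succ) j ≤ N)
    {q : MvPolynomial (Fin (n + 1)) R}
    (hq : (clearedMat R (N + 1) (spExp lam)).det = clearedDenom R (n + 1) * q) :
    (clearedMat R N (spExp fun j => lam j.succ)).det = clearedDenom R n * zeroFirst R n q := by
  have h := congrArg (zeroFirst R n) hq
  rw [map_mul, zeroFirst_det_clearedMat h0 fun j => (congrFun (spExp_succ lam) j).le.trans (hle j),
    zeroFirst_clearedDenom, spExp_succ, neg_mul, neg_inj, mul_assoc] at h
  exact mul_left_cancel₀ (Finset.prod_ne_zero_iff.mpr fun i _ => X_ne_zero i) h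

theorem clearedDenom_ne_zero : clearedDenom R m ≠ 0 := by
  induction m with
  | zero => simp [clearedDenom]
  | succ n ih =>
    intro h
    have h' := zeroFirst_clearedDenom (R := R) (n := n)
    rw [h, map_zero, eq_comm, neg_eq_zero] at h'
    exact mul_ne_zero (Finset.prod_ne_zero_iff.mpr fun i _ => X_ne_zero i) ih h'

theorem totalDegree_clearedDenom_le :
    (clearedDenom R m).totalDegree ≤ 2 * m + 3 * m.choose 2 := by
  rw [← sum_add_spExp_zero]
  exact totalDegree_det_le _ _ fun i j => (totalDegree_sub _ _).trans
    (max_le (by simp [totalDegree_X_pow]) (by simp [totalDegree_X_pow]; omega))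

theorem totalDegree_weylDenom : (weylDenom R m).totalDegree = 2 * m + 3 * m.choose 2 := by
  have hA (i : Fin m) : (X i ^ 2 - 1 : MvPolynomial (Fin m) R).totalDegree = 2 := by
    rw [sub_eq_add_neg, totalDegree_add_eq_left_of_totalDegree_lt] <;> simp [totalDegree_X_pow]
  have hQ (i j : Fin m) : (X i * X j - 1 : MvPolynomial (Fin m) R).totalDegree = 2 := by
    rw [sub_eq_add_neg, totalDegree_add_eq_left_of_totalDegree_lt] <;>
      simp [totalDegree_mul_of_isDomain, X_ne_zero]
  have hne {f : MvPolynomial (Fin m) R} {d : ℕ} (hf : f.totalDegree = d + 1) : f ≠ 0 := by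
    rintro rfl
    simp at hf
  have hP (p) (hp : p ∈ ltPairs m) := totalDegree_X_sub_X (R := R) (mem_ltPairs.mp hp).ne
  have hA0 : ∏ i, (X i ^ 2 - 1 : MvPolynomial (Fin m) R) ≠ 0 :=
    Finset.prod_ne_zero_iff.mpr fun i _ => hne (hA i)
  have hP0 : ∏ p ∈ ltPairs m, (X p.1 - X p.2 : MvPolynomial (Fin m) R) ≠ 0 :=
    Finset.prod_ne_zero_iff.mpr fun p hp => hne (hP p hp)
  have hQ0 : ∏ p ∈ ltPairs m, (X p.1 * X p.2 - 1 : MvPolynomial (Fin m) R) ≠ 0 :=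
    Finset.prod_ne_zero_iff.mpr fun p _ => hne (hQ p.1 p.2)
  rw [weylDenom, totalDegree_mul_of_isDomain (mul_ne_zero hA0 hP0) hQ0,
    totalDegree_mul_of_isDomain hA0 hP0, totalDegree_prod_of_isDomain _ _ fun i _ => hne (hA i),
    totalDegree_prod_of_isDomain _ _ fun p hp => hne (hP p hp),
    totalDegree_prod_of_isDomain _ _ fun p _ => hne (hQ p.1 p.2),
    Finset.sum_congr rfl fun p hp => hP p hp]
  simp [hA, hQ, card_ltPairs]
  ring

end Denominator

section Field

variable {K : Type*} [Field K] {m : ℕ}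

theorem associated_weylDenom_clearedDenom :
    Associated (weylDenom K m) (clearedDenom K m) := by
  obtain ⟨t, ht⟩ : weylDenom K m ∣ clearedDenom K m :=
    weylDenom_dvd_det_clearedMat fun j => by simp [spExp]
  have hW : weylDenom K m ≠ 0 := left_ne_zero_of_mul (ht ▸ clearedDenom_ne_zero)
  have ht0 : t ≠ 0 := right_ne_zero_of_mul (ht ▸ clearedDenom_ne_zero)
  -- The total degrees agree, so the cofactor `t` is a nonzero constant.
  have hdeg : t.totalDegree = 0 := by
    have := ht ▸ totalDegree_clearedDenom_le (R := K) (m := m)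
    rw [totalDegree_mul_of_isDomain hW ht0, totalDegree_weylDenom] at this
    omega
  rw [totalDegree_eq_zero_iff_eq_C] at hdeg
  have hunit : IsUnit t := hdeg ▸ (Ne.isUnit fun h => ht0 (by rw [hdeg, h, map_zero])).map C
  exact ⟨hunit.unit, ht.symm⟩

theorem clearedDenom_dvd_det_clearedMat {N : ℕ} {e : Fin m → ℕ}
    (he : ∀ j, e j ≤ N) : clearedDenom K m ∣ (clearedMat K N e).det :=
  associated_weylDenom_clearedDenom.dvd_iff_dvd_left.mp (weylDenom_dvd_det_clearedMat he)

theorem spEvenMat_eq (lam : Fin m → ℕ) (x : Fin m → K) :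
    spEvenMat m lam x = of fun i j => x i ^ spExp lam j - (x i ^ spExp lam j)⁻¹ := by
  ext i j
  have hj : ((spExp lam j : ℕ) : ℤ) = (lam j : ℤ) + m - (j : ℕ) := by
    simp only [spExp]
    omega
  simp only [spEvenMat, of_apply]
  rw [← hj, _root_.zpow_neg, zpow_natCast]

theorem eval_det_clearedMat {N : ℕ} {e : Fin m → ℕ} (he : ∀ j, e j ≤ N) {x : Fin m → K}
    (hx : ∀ i, x i ≠ 0) :
    eval x (clearedMat K N e).det =
      (∏ i, x i) ^ N * (of fun i j => x i ^ e j - (x i ^ e j)⁻¹).det := by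
  rw [RingHom.map_det, ← Finset.prod_pow, ← det_mul_column]
  congr 1
  ext i j
  simp [clearedMat, mul_sub, ← pow_add, pow_sub₀ _ (hx i) (he j)]

theorem prod_pow_mul_spEven_eq {k : ℕ} {lam : Fin m → ℕ} (hle : ∀ j, spExp lam j ≤ k + m)
    {q : MvPolynomial (Fin m) K}
    (hq : (clearedMat K (k + m) (spExp lam)).det = clearedDenom K m * q)
    {x : Fin m → K} (hx : ∀ i, x i ≠ 0) (hden : (spEvenMat m (fun _ => 0) x).det ≠ 0) :
    (∏ i, x i) ^ k * spEven m lam x = eval x q := by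
  have h := congrArg (eval x) hq
  rw [map_mul, clearedDenom, eval_det_clearedMat hle hx,
    eval_det_clearedMat (fun j => by simp [spExp]) hx, ← spEvenMat_eq, ← spEvenMat_eq,
    pow_add] at h
  have hprod : (∏ i, x i) ^ m ≠ 0 := pow_ne_zero m (Finset.prod_ne_zero_iff.mpr fun i _ => hx i)
  rw [spEven, ← mul_div_assoc, div_eq_iff hden]
  exact mul_left_cancel₀ hprod (by linear_combination h)

end Field

end Symplectic

open Symplectic in
/-- `(x₁⋯x_{n+1})^r Sp_{2(n+1)}(λ; x)` is a polynomial in the `xᵢ`, and its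
evaluation at `x₁ = 0` is `(x₂⋯x_{n+1})^r Sp_{2n}((λ₂,…,λ_{n+1}); x₂,…,x_{n+1})` if
`λ₁ = r`, and `0` if `λ₁ < r`. -/
theorem stmt13 (n r : ℕ) {K : Type*} [Field K]
    (lam : Fin (n+1) → ℕ) (hlam : Antitone lam) (hr : lam 0 ≤ r) :
    ∃ P : MvPolynomial (Fin (n+1)) K,
      (∀ x : Fin (n+1) → K,
        (∀ i, x i ≠ 0) → Matrix.det (spEvenMat (n+1) (fun _ => 0) x) ≠ 0 →
        (∏ i, x i) ^ r * spEven (n+1) lam x = MvPolynomial.eval x P)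
      ∧
      (∀ x : Fin (n+1) → K, x 0 = 0 → (∀ i, i ≠ 0 → x i ≠ 0) →
        Matrix.det (spEvenMat n (fun _ => 0) (fun i : Fin n => x i.succ)) ≠ 0 →
        MvPolynomial.eval x P =
          if lam 0 = r then
            (∏ i : Fin n, x i.succ) ^ r *
              spEven n (fun j => lam j.succ) (fun i : Fin n => x i.succ)
          else 0) := by
  have hle (j : Fin (n + 1)) : spExp lam j ≤ lam 0 + (n + 1) := by
    have := hlam (Fin.zero_le j)
    simp only [spExp]
    omega
  have hle' (j : Fin n) : spExp (fun j => lam j.succ) j ≤ lam 0 + n := by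
    have := hlam (Fin.zero_le j.succ)
    simp only [spExp]
    omega
  obtain ⟨q, hq⟩ := clearedDenom_dvd_det_clearedMat (K := K) hle
  refine ⟨(∏ i, X i) ^ (r - lam 0) * q, fun x hx hden => ?_, fun x hx0 hx hden => ?_⟩
  · rw [map_mul, ← prod_pow_mul_spEven_eq hle hq hx hden, map_pow, map_prod]
    simp only [eval_X]
    rw [← mul_assoc, ← pow_add, tsub_add_cancel_of_le hr]
  · split_ifs with h
    · have hq' := det_clearedMat_eq_clearedDenom_mul_zeroFirst (N := lam 0 + n)
        (by simp only [spExp, Fin.val_zero]; omega) hle' hq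
      rw [h, tsub_self, pow_zero, one_mul, ← eval_zeroFirst hx0, ← h,
        prod_pow_mul_spEven_eq hle' hq' (fun i => hx _ i.succ_ne_zero) hden]
    · simp [Finset.prod_eq_zero (Finset.mem_univ 0) hx0, zero_pow (show r - lam 0 ≠ 0 by omega)]
end
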